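/- Let (A, +, ∘) be a strongly nilpotent left brace. Then for all x, y ∈ A, the element (x + x)*y − (x*y + x*y) lies in the additive subgroup of (A,+) generated by all iterated *-products (with any distribution of brackets) consisting of at least two copies of x followed by a single final factor y. -/

import Mathlib

/-!
In a left brace `a * -` is additive but `- * c` is not: writing `a + b = a ∘ g` with
`g = a⁻¹ * b + b` gives `(a + b) * c = a * c + g * c + a * (g * c)`.
Let `W k` be spanned by the pure `x`-words with at least `k` letters and `S k` by the words
ending in `y` with at least `k` copies of `x`. Every word with `m` letters maps `W j` into
`W (m + j)` and `S j` into `S (m + j)`. Strong nilpotency makes `a * -` nilpotent, which lets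
`a⁻¹` inherit this degree shift from `a`; with the formula above the shift then passes to sums
and negatives, by descending induction on `k` (the spaces `W k` vanish for large `k`).
Finally `x + x = x ∘ (x + e)` with `e = x⁻¹ * x ∈ W 2`, so
`(x + x) * y - 2 (x * y) = x * ((x + e) * y) + ((x + e) * y - x * y) ∈ S 2`.
-/

/-- A left brace: an abelian group `(A, +)` together with a group operation `∘`
satisfying `a ∘ (b + c) + a = a ∘ b + a ∘ c`. -/
structure LeftBrace (A : Type*) [AddCommGroup A] where
  circ : A → A → A
  one : A
  inv : A → A
  circ_assoc : ∀ a b c : A, circ (circ a b) c = circ a (circ b c)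
  one_circ : ∀ a : A, circ one a = a
  circ_one : ∀ a : A, circ a one = a
  inv_circ : ∀ a : A, circ (inv a) a = one
  left_dist : ∀ a b c : A, circ a (b + c) + a = circ a b + circ a c

/-- `a * b = a ∘ b - a - b`. -/
def LeftBrace.star {A : Type*} [AddCommGroup A] (B : LeftBrace A) (a b : A) : A :=
  B.circ a b - a - b

/-- The strong radical chain: `strongChain B m` is `A^[m+1]`; `A^[1] = A` and for
`i > 1`, `A^[i]` is the additive subgroup generated by all `a * b` with
`a ∈ A^[j]`, `b ∈ A^[i-j]`, `0 < j < i`. (Inside the binder `j ≤ m` we have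
`min j m = j`, so the generating set below is exactly the intended one.) -/
def LeftBrace.strongChain {A : Type*} [AddCommGroup A] (B : LeftBrace A) : ℕ → AddSubgroup A
  | 0 => ⊤
  | (m+1) => AddSubgroup.closure
      {x : A | ∃ j ≤ m, ∃ u ∈ LeftBrace.strongChain B (min j m),
        ∃ v ∈ LeftBrace.strongChain B (m - j), x = B.star u v}
termination_by n => n
decreasing_by
  · exact Nat.lt_succ_of_le (Nat.min_le_right j m)
  · exact Nat.lt_succ_of_le (Nat.sub_le m j)

/-- A brace is strongly nilpotent if `A^[n] = 0` for some `n`. -/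
def LeftBrace.StronglyNilpotent {A : Type*} [AddCommGroup A] (B : LeftBrace A) : Prop :=
  ∃ n : ℕ, B.strongChain n = ⊥

/-- `StarWord B x y w n t` says `w` is an iterated `*`-product whose leaves are
`n` copies of `x` and, if `t = true`, a single copy of `y` as the rightmost
(final) leaf. -/
inductive StarWord {A : Type*} [AddCommGroup A] (B : LeftBrace A) (x y : A) :
    A → ℕ → Bool → Prop
  | base_x : StarWord B x y x 1 false
  | base_y : StarWord B x y y 0 true
  | node {u v : A} {n m : ℕ} {t : Bool} :
      StarWord B x y u n false → StarWord B x y v m t →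
      StarWord B x y (B.star u v) (n + m) t

lemma AddSubgroup.mem_of_add_apply_mem {G : Type*} [AddGroup G] (T : AddSubgroup G) (f : G →+ G)
    (hT : ∀ t ∈ T, f t ∈ T) {m : ℕ} {v : G} (hm : f^[m] v = 0) (hv : v + f v ∈ T) : v ∈ T := by
  induction m generalizing v with
  | zero => simp only [Function.iterate_zero, id_eq] at hm; simp [hm]
  | succ m ih =>
    have hfv : f v ∈ T := ih hm (by simpa using hT _ hv)
    simpa using sub_mem hv hfv

namespace LeftBrace

variable {A : Type*} [AddCommGroup A] (B : LeftBrace A)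

lemma circ_eq_add_add_star (a b : A) : B.circ a b = a + b + B.star a b := by
  unfold star; abel

lemma star_add_right (a b c : A) : B.star a (b + c) = B.star a b + B.star a c := by
  unfold star
  rw [eq_sub_of_add_eq (B.left_dist a b c)]
  abel

lemma circ_zero (a : A) : B.circ a 0 = a := by
  have h := B.left_dist a 0 0
  rw [add_zero] at h
  exact (add_left_cancel h).symm

lemma one_eq_zero : B.one = 0 :=
  (B.circ_zero B.one).symm.trans (B.one_circ 0)

lemma zero_circ (a : A) : B.circ 0 a = a := by
  rw [← B.one_eq_zero, B.one_circ]

lemma zero_star (a : A) : B.star 0 a = 0 := by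
  unfold star; rw [B.zero_circ]; abel

lemma inv_star_self (a : A) : B.star (B.inv a) a = -B.inv a - a := by
  unfold star; rw [B.inv_circ, B.one_eq_zero]; abel

lemma neg_eq_inv_add (a : A) : -a = B.inv a + B.star (B.inv a) a := by
  rw [inv_star_self]; abel

lemma circ_inv (a : A) : B.circ a (B.inv a) = 0 := by
  have cancel : ∀ b c : A, B.circ (B.inv b) (B.circ b c) = c := fun b c => by
    rw [← B.circ_assoc, B.inv_circ, B.one_circ]
  calc B.circ a (B.inv a)
      = B.circ (B.inv (B.inv a)) (B.circ (B.inv a) (B.circ a (B.inv a))) := (cancel _ _).symm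
    _ = B.circ (B.inv (B.inv a)) (B.inv a) := by rw [cancel a]
    _ = 0 := by rw [B.inv_circ, B.one_eq_zero]

lemma star_circ (a b c : A) :
    B.star (B.circ a b) c = B.star a (B.star b c) + B.star b c + B.star a c := by
  have h : B.star (B.circ a b) c = B.circ a (B.circ b c) - B.circ a b - c := by
    rw [star, circ_assoc]
  rw [h, circ_eq_add_add_star B a (B.circ b c), circ_eq_add_add_star B b c, star_add_right,
    star_add_right, circ_eq_add_add_star B a b]
  abel

lemma star_inv (a u : A) :
    B.star (B.inv a) u + B.star a (B.star (B.inv a) u) = -B.star a u := by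
  have h := B.star_circ a (B.inv a) u
  rw [B.circ_inv, B.zero_star] at h
  rw [eq_neg_iff_add_eq_zero, h]
  abel

/-- The brace form of `a + b = a ∘ (a⁻¹ ∘ (a + b))`. -/
lemma circ_inv_star_add (a b : A) : B.circ a (B.star (B.inv a) b + b) = a + b := by
  calc B.circ a (B.star (B.inv a) b + b) = B.circ a (B.circ (B.inv a) (a + b)) := by
        congr 1
        rw [circ_eq_add_add_star B (B.inv a), star_add_right, inv_star_self]
        abel
    _ = a + b := by rw [← B.circ_assoc, B.circ_inv, B.zero_circ]

def starHom (a : A) : A →+ A := AddMonoidHom.mk' (B.star a) (B.star_add_right a)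

@[simp] lemma starHom_apply (a b : A) : B.starHom a b = B.star a b := rfl

lemma strongChain_zero : B.strongChain 0 = ⊤ := by rw [strongChain]

lemma star_mem_strongChain {p q : ℕ} {u v : A} (hu : u ∈ B.strongChain p)
    (hv : v ∈ B.strongChain q) : B.star u v ∈ B.strongChain (p + q + 1) := by
  rw [strongChain]
  refine AddSubgroup.subset_closure ⟨p, by omega, u, ?_, v, ?_, rfl⟩
  · rwa [min_eq_left (by omega)]
  · rwa [show p + q - p = q by omega]

lemma strongChain_antitone : Antitone B.strongChain := by
  refine antitone_nat_of_succ_le fun m => ?_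
  induction m using Nat.strong_induction_on with
  | _ m ih =>
    cases m with
    | zero => simp [strongChain_zero]
    | succ m =>
      rw [strongChain, AddSubgroup.closure_le]
      rintro _ ⟨j, hj, u, hu, v, hv, rfl⟩
      rcases hj.lt_or_eq with hj | rfl
      · rw [min_eq_left (by omega)] at hu
        rw [show m + 1 - j = m - j + 1 by omega] at hv
        have huv := B.star_mem_strongChain hu (ih (m - j) (by omega) hv)
        rwa [show j + (m - j) + 1 = m + 1 by omega] at huv
      · rw [min_self] at hu
        simpa using B.star_mem_strongChain (q := 0) (ih m (by omega) hu)
          (by simp [strongChain_zero])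

lemma iterate_star_mem_strongChain (a v : A) (m : ℕ) : (B.star a)^[m] v ∈ B.strongChain m := by
  induction m with
  | zero => simp [strongChain_zero]
  | succ m ih =>
    rw [Function.iterate_succ_apply']
    simpa using B.star_mem_strongChain (p := 0) (by simp [strongChain_zero]) ih

variable {B}

lemma StronglyNilpotent.exists_iterate_star_eq_zero (hB : B.StronglyNilpotent) (a : A) :
    ∃ n, ∀ v, (B.star a)^[n] v = 0 := by
  obtain ⟨n, hn⟩ := hB
  exact ⟨n, fun v => by simpa [hn] using B.iterate_star_mem_strongChain a v n⟩

end LeftBrace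

namespace LeftBrace

variable {A : Type*} [AddCommGroup A] (B : LeftBrace A)

def RaisesFiltration (F : ℕ → AddSubgroup A) (u : A) (k : ℕ) : Prop :=
  ∀ j, ∀ v ∈ F j, B.star u v ∈ F (k + j)

variable {B} {F W : ℕ → AddSubgroup A} {a b u : A} {k : ℕ}

lemma raisesFiltration_zero : B.RaisesFiltration F 0 k := fun j v _ => by
  rw [zero_star]; exact zero_mem _

lemma RaisesFiltration.mono (hF : Antitone F) (h : B.RaisesFiltration F u k) {l : ℕ}
    (hlk : l ≤ k) : B.RaisesFiltration F u l :=
  fun j v hv => hF (by omega) (h j v hv)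

lemma RaisesFiltration.circ (hF : Antitone F) (ha : B.RaisesFiltration F a k)
    (hb : B.RaisesFiltration F b k) : B.RaisesFiltration F (B.circ a b) k := fun j v hv => by
  rw [star_circ]
  exact add_mem (add_mem (hF (by omega) (ha _ _ (hb j v hv))) (hb j v hv)) (ha j v hv)

/-- `a * -` is nilpotent and `a⁻¹ * v + a * (a⁻¹ * v) = -(a * v)`, so `a⁻¹ * v` is pinned down
by `a * v` inside any `a * -`-stable subgroup. -/
lemma RaisesFiltration.inv (hB : B.StronglyNilpotent) (hF : Antitone F)
    (h : B.RaisesFiltration F u k) : B.RaisesFiltration F (B.inv u) k := by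
  intro j v hv
  obtain ⟨n, hn⟩ := hB.exists_iterate_star_eq_zero u
  refine (F (k + j)).mem_of_add_apply_mem (B.starHom u) (fun t ht => hF (by omega) (h _ t ht))
    (hn _) ?_
  rw [starHom_apply, star_inv]
  exact neg_mem (h j v hv)

lemma RaisesFiltration.add_star_sub_star_mem (hB : B.StronglyNilpotent) (hF : Antitone F)
    (hW : Antitone W) (haW : B.RaisesFiltration W a k) (haF : B.RaisesFiltration F a k)
    (hb : b ∈ W (k + 1)) (hW_raises : ∀ g ∈ W (k + 1), B.RaisesFiltration F g (k + 1))
    {j : ℕ} {v : A} (hv : v ∈ F j) : B.star (a + b) v - B.star a v ∈ F (k + 1 + j) := by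
  have hg : B.star (B.inv a) b + b ∈ W (k + 1) :=
    add_mem (hW (by omega) ((haW.inv hB hW) _ _ hb)) hb
  have hgv := hW_raises _ hg j v hv
  rw [← circ_inv_star_add, star_circ, add_sub_cancel_right]
  exact add_mem (hF (by omega) (haF _ _ hgv)) hgv

lemma RaisesFiltration.add_of_mem (hB : B.StronglyNilpotent) (hF : Antitone F)
    (hW : Antitone W) (haW : B.RaisesFiltration W a k) (haF : B.RaisesFiltration F a k)
    (hb : b ∈ W (k + 1)) (hW_raises : ∀ g ∈ W (k + 1), B.RaisesFiltration F g (k + 1)) :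
    B.RaisesFiltration F (a + b) k := fun j v hv => by
  rw [← sub_add_cancel (B.star (a + b) v) (B.star a v)]
  exact add_mem (hF (by omega) (haW.add_star_sub_star_mem hB hF hW haF hb hW_raises hv))
    (haF j v hv)

lemma RaisesFiltration.add (hB : B.StronglyNilpotent) (hF : Antitone F) (hW : Antitone W)
    (hk : 1 ≤ k) {u₁ u₂ : A} (hu₂ : u₂ ∈ W k) (h₁W : B.RaisesFiltration W u₁ k)
    (h₂W : B.RaisesFiltration W u₂ k) (h₁F : B.RaisesFiltration F u₁ k)
    (h₂F : B.RaisesFiltration F u₂ k)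
    (hW_raises : ∀ g ∈ W (k + 1), B.RaisesFiltration F g (k + 1)) :
    B.RaisesFiltration F (u₁ + u₂) k := by
  have hh : B.star (B.inv u₁) u₂ ∈ W (k + 1) := hW (by omega) ((h₁W.inv hB hW) k u₂ hu₂)
  rw [← circ_inv_star_add, add_comm]
  exact h₁F.circ hF (h₂W.add_of_mem hB hF hW h₂F hh hW_raises)

lemma RaisesFiltration.neg (hB : B.StronglyNilpotent) (hF : Antitone F) (hW : Antitone W)
    (hk : 1 ≤ k) (hu : u ∈ W k) (huW : B.RaisesFiltration W u k)
    (huF : B.RaisesFiltration F u k)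
    (hW_raises : ∀ g ∈ W (k + 1), B.RaisesFiltration F g (k + 1)) :
    B.RaisesFiltration F (-u) k := by
  have hh : B.star (B.inv u) u ∈ W (k + 1) := hW (by omega) ((huW.inv hB hW) k u hu)
  rw [neg_eq_inv_add]
  exact (huW.inv hB hW).add_of_mem hB hF hW (huF.inv hB hF) hh hW_raises

end LeftBrace

namespace StarWord

variable {A : Type*} [AddCommGroup A] {B : LeftBrace A} {x y : A}

/-- `W k = wordSpan B x y false k` and `S k = wordSpan B x y true k`. -/
def wordSpan (B : LeftBrace A) (x y : A) (t : Bool) (k : ℕ) : AddSubgroup A :=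
  AddSubgroup.closure {w | ∃ n, StarWord B x y w n t ∧ k ≤ n}

lemma wordSpan_antitone (t : Bool) : Antitone (wordSpan B x y t) :=
  fun _ _ hkl => AddSubgroup.closure_mono fun _ ⟨n, hw, hn⟩ => ⟨n, hw, hkl.trans hn⟩

lemma mem_wordSpan {w : A} {n : ℕ} {t : Bool} (hw : StarWord B x y w n t) :
    w ∈ wordSpan B x y t n :=
  AddSubgroup.subset_closure ⟨n, hw, le_rfl⟩

lemma raisesFiltration {a : A} {m : ℕ} (ha : StarWord B x y a m false) (t : Bool) :
    B.RaisesFiltration (wordSpan B x y t) a m := by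
  intro j v hv
  have hspan : wordSpan B x y t j ≤ (wordSpan B x y t (m + j)).comap (B.starHom a) :=
    (AddSubgroup.closure_le _).2 fun _ ⟨n, hw, hn⟩ =>
      AddSubgroup.subset_closure ⟨m + n, node ha hw, by omega⟩
  exact hspan hv

lemma mem_strongChain {w : A} {n : ℕ} {t : Bool} (hw : StarWord B x y w n t) :
    w ∈ B.strongChain (n - 1) := by
  induction hw with
  | base_x | base_y => simp [LeftBrace.strongChain_zero]
  | node _ _ ih₁ ih₂ => exact B.strongChain_antitone (by omega) (B.star_mem_strongChain ih₁ ih₂)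

lemma wordSpan_false_le_strongChain (k : ℕ) : wordSpan B x y false k ≤ B.strongChain (k - 1) :=
  (AddSubgroup.closure_le _).2 fun _ ⟨_, hw, hn⟩ =>
    B.strongChain_antitone (by omega) hw.mem_strongChain

theorem raisesFiltration_of_mem_wordSpan (hB : B.StronglyNilpotent) {k : ℕ} (hk : 1 ≤ k)
    {u : A} (hu : u ∈ wordSpan B x y false k) (t : Bool) :
    B.RaisesFiltration (wordSpan B x y t) u k := by
  induction k using Nat.strong_decreasing_induction generalizing u t with
  | base =>
    obtain ⟨n, hn⟩ := hB
    refine ⟨n, fun k hk _ u hu t => ?_⟩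
    have hu0 := B.strongChain_antitone (show n ≤ k - 1 by omega)
      (wordSpan_false_le_strongChain k hu)
    rw [hn, AddSubgroup.mem_bot] at hu0
    exact hu0 ▸ LeftBrace.raisesFiltration_zero
  | step k ih =>
    have hW_raises (t : Bool) (g : A) (hg : g ∈ wordSpan B x y false (k + 1)) :=
      ih (k + 1) (by omega) (by omega) hg t
    induction hu using AddSubgroup.closure_induction generalizing t with
    | mem w hw =>
      obtain ⟨m, hw, hkm⟩ := hw
      exact (hw.raisesFiltration t).mono (wordSpan_antitone t) hkm
    | zero => exact LeftBrace.raisesFiltration_zero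
    | add u₁ u₂ _ hu₂ h₁ h₂ =>
      exact (h₁ false).add hB (wordSpan_antitone t) (wordSpan_antitone false) hk hu₂ (h₂ false)
        (h₁ t) (h₂ t) (hW_raises t)
    | neg u hu h =>
      exact (h false).neg hB (wordSpan_antitone t) (wordSpan_antitone false) hk hu (h t)
        (hW_raises t)

end StarWord

open LeftBrace StarWord in
theorem statement2 {A : Type*} [AddCommGroup A] (B : LeftBrace A)
    (hSN : B.StronglyNilpotent) (x y : A) :
    B.star (x + x) y - (B.star x y + B.star x y)
      ∈ AddSubgroup.closure {w : A | ∃ n : ℕ, StarWord B x y w n true ∧ 2 ≤ n} := by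
  have hxW : B.RaisesFiltration (wordSpan B x y false) x 1 := base_x.raisesFiltration false
  have hxS : B.RaisesFiltration (wordSpan B x y true) x 1 := base_x.raisesFiltration true
  have hy : y ∈ wordSpan B x y true 0 := mem_wordSpan base_y
  have he : B.star (B.inv x) x ∈ wordSpan B x y false 2 :=
    hxW.inv hSN (wordSpan_antitone false) 1 x (mem_wordSpan base_x)
  have hW_raises (g : A) (hg : g ∈ wordSpan B x y false 2) :=
    raisesFiltration_of_mem_wordSpan hSN (by norm_num) hg true
  have hsub : B.star (x + B.star (B.inv x) x) y - B.star x y ∈ wordSpan B x y true 2 :=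
    hxW.add_star_sub_star_mem (k := 1) (j := 0) hSN (wordSpan_antitone true)
      (wordSpan_antitone false) hxS he hW_raises hy
  have hxey : B.star (x + B.star (B.inv x) x) y ∈ wordSpan B x y true 1 :=
    hxW.add_of_mem (k := 1) hSN (wordSpan_antitone true) (wordSpan_antitone false) hxS he
      hW_raises 0 y hy
  have hsplit : B.star (x + x) y - (B.star x y + B.star x y) =
      B.star x (B.star (x + B.star (B.inv x) x) y) +
        (B.star (x + B.star (B.inv x) x) y - B.star x y) := by
    rw [← B.circ_inv_star_add x x, star_circ, add_comm x]
    abel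
  rw [hsplit]
  exact add_mem (hxS 1 _ hxey) hsub
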